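/- Let α = (α_1 ≥ ⋯ ≥ α_l > 0) be a partition of n with all parts odd, let w ∈ C_α, and let 1 ≤ m ≤ n−1. Then (wδ)[⌈m/2⌉, n−⌊m/2⌋+1] + (wδ)[n−⌊m/2⌋, ⌈m/2⌉+1] ≤ n − min{k : α_1 + ⋯ + α_k ≥ m}. -/

import Mathlib

/-- For a permutation `u` of `{1,...,n}` (encoded on `Fin n`, with `k : Fin n`
representing the number `k+1`), `entryA u i j = #{1 ≤ k ≤ i : u(k) ≥ j}`. -/
def entryA {n : ℕ} (u : Equiv.Perm (Fin n)) (i j : ℕ) : ℕ :=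
  (Finset.univ.filter (fun k : Fin n => (k : ℕ) + 1 ≤ i ∧ j ≤ (u k : ℕ) + 1)).card

/-- `w ∈ C_α` for a partition `α = (α 1 ≥ ⋯ ≥ α ℓ > 0)` of `n` with odd parts:
there is a decomposition `{1,...,n} = I_1 ⊔ ⋯ ⊔ I_ℓ` with `|I_j| = α_j`, such that
the orbits of `w·δ` on `{1,...,n}` are exactly the sets `I_j`.  Here
`δ = Fin.revPerm` is the permutation `i ↦ n+1−i`. -/
def MemCClassA (n ℓ : ℕ) (α : ℕ → ℕ) (w : Equiv.Perm (Fin n)) : Prop :=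
  ∃ I : ℕ → Finset (Fin n),
    (∀ j, 1 ≤ j → j ≤ ℓ → (I j).card = α j) ∧
    (∀ j j', 1 ≤ j → j < j' → j' ≤ ℓ → Disjoint (I j) (I j')) ∧
    ((Finset.Icc 1 ℓ).biUnion I = Finset.univ) ∧
    (∀ j, 1 ≤ j → j ≤ ℓ → ∀ x ∈ I j, ∀ y : Fin n,
      ((w * Fin.revPerm).SameCycle x y ↔ y ∈ I j))

/-!
Write `u = wδ`, and let `A` and `B` be the first `⌈m/2⌉` and the last `⌊m/2⌋` positions. The first
entry counts the steps `k ↦ u k` from `A` into `B`; by inclusion–exclusion the second is `n - m`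
plus the number of steps from `B` into `A`. So it suffices that the number of steps between `A` and
`B` is at most `m - r`, where `r` is the number of cycles of `u` meeting `A ∪ B`. On such a cycle
these steps are fewer than its points in `A ∪ B`: if the cycle lies in `A ∪ B`, they are the changes
of side along a cycle of odd length, hence even in number; otherwise the cycle leaves `A ∪ B` at
some point of `A ∪ B`, which is not the start of such a step. Finally `m` is at most the total size
of these `r` cycles, hence at most `α₁ + ⋯ + α_r`, so the minimum in the bound is at most `r`.
-/

open Finset Equiv

section Permutations

variable {α ι : Type*} (σ : Perm α)

theorem Equiv.Perm.card_filter_apply_of_mapsTo {C : Finset α} (hC : ∀ k ∈ C, σ k ∈ C)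
    (p : α → Prop) [DecidablePred p] : #{k ∈ C | p (σ k)} = #{k ∈ C | p k} := by
  have hmap : C.map σ.toEmbedding = C :=
    map_eq_of_subset fun _ hy => by
      obtain ⟨k, hk, rfl⟩ := mem_map.mp hy
      exact hC k hk
  rw [← card_map σ.toEmbedding, map_filter, hmap]
  simp

theorem Equiv.Perm.card_filter_notMem_apply_notMem_add_card_add_card [DecidableEq α] [Fintype α]
    (A B : Finset α) :
    #{k | k ∉ B ∧ σ k ∉ A} + #A + #B = Fintype.card α + #{k | k ∈ B ∧ σ k ∈ A} := by
  have hpre : #{k | σ k ∈ A} = #A := by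
    rw [σ.card_filter_apply_of_mapsTo (fun k _ => mem_univ (σ k)) (· ∈ A), filter_mem_eq_inter,
      univ_inter]
  have hB : #{k | k ∈ B} = #B := by rw [filter_mem_eq_inter, univ_inter]
  have hcompl := card_filter_add_card_filter_not (s := univ) (fun k => k ∈ B ∨ σ k ∈ A)
  have hincl := card_union_add_card_inter {k | k ∈ B} {k | σ k ∈ A}
  rw [← filter_or, ← filter_and] at hincl
  simp only [not_or, card_univ] at hcompl
  omega

theorem Equiv.Perm.even_card_filter_xor [DecidableEq α] {C : Finset α}
    (hC : ∀ k ∈ C, σ k ∈ C) (A : Finset α) : Even #{k ∈ C | Xor (k ∈ A) (σ k ∈ A)} := by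
  have hpoint : ∀ k ∈ C, (if Xor (k ∈ A) (σ k ∈ A) then 1 else 0) +
      2 * (if k ∈ A ∧ σ k ∈ A then 1 else 0) =
      (if k ∈ A then 1 else 0) + (if σ k ∈ A then 1 else 0) := by
    intro k _
    by_cases h₁ : k ∈ A <;> by_cases h₂ : σ k ∈ A <;> simp [h₁, h₂, Xor]
  have hsum := sum_congr rfl hpoint
  simp only [sum_add_distrib, ← mul_sum, sum_boole, Nat.cast_id] at hsum
  rw [σ.card_filter_apply_of_mapsTo hC (· ∈ A)] at hsum
  rw [Nat.even_iff]
  omega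

theorem Equiv.Perm.apply_mem_of_sameCycle_iff {C : Finset α}
    (hC : ∀ x ∈ C, ∀ y, σ.SameCycle x y ↔ y ∈ C) {k : α} (hk : k ∈ C) : σ k ∈ C :=
  (hC k hk _).mp (sameCycle_apply_right.mpr (SameCycle.refl σ k))

theorem Equiv.Perm.exists_mem_apply_notMem [DecidableEq α] [Finite α] {C S : Finset α}
    (hC : ∀ x ∈ C, ∀ y, σ.SameCycle x y ↔ y ∈ C) (hCS : ¬ C ⊆ S) (hne : (C ∩ S).Nonempty) :
    ∃ k ∈ C ∩ S, σ k ∉ S := by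
  by_contra! hexit
  obtain ⟨x, hx⟩ := hne
  obtain ⟨z, hzC, hzS⟩ := not_subset.mp hCS
  have hpow : ∀ i : ℕ, (σ ^ i) x ∈ C ∩ S := by
    intro i
    induction i with
    | zero => exact hx
    | succ i ih =>
      rw [pow_succ', mul_apply]
      exact mem_inter.mpr ⟨σ.apply_mem_of_sameCycle_iff hC (mem_inter.mp ih).1, hexit _ ih⟩
  obtain ⟨i, -, rfl⟩ := ((hC x (mem_inter.mp hx).1 z).mpr hzC).exists_pow_eq'
  exact hzS (mem_inter.mp (hpow i)).2

theorem Equiv.Perm.card_filter_crossing_lt [DecidableEq α] [Finite α] {C A B : Finset α}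
    (hC : ∀ x ∈ C, ∀ y, σ.SameCycle x y ↔ y ∈ C) (hodd : Odd #C) (hAB : _root_.Disjoint A B)
    (hne : (C ∩ (A ∪ B)).Nonempty) :
    #{k ∈ C | k ∈ A ∧ σ k ∈ B ∨ k ∈ B ∧ σ k ∈ A} < #(C ∩ (A ∪ B)) := by
  by_cases hsub : C ⊆ A ∪ B
  · have hxor : {k ∈ C | k ∈ A ∧ σ k ∈ B ∨ k ∈ B ∧ σ k ∈ A} =
        {k ∈ C | Xor (k ∈ A) (σ k ∈ A)} := by
      refine filter_congr fun k hk => ?_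
      have hk' := mem_union.mp (hsub hk)
      have hσk := mem_union.mp (hsub (σ.apply_mem_of_sameCycle_iff hC hk))
      have hA_notB : ∀ x ∈ A, x ∉ B := fun _ hx => Finset.disjoint_left.mp hAB hx
      unfold Xor
      grind
    rw [inter_eq_left.mpr hsub, hxor]
    refine lt_of_le_of_ne (card_filter_le _ _) fun heq => ?_
    have heven := σ.even_card_filter_xor (fun k hk => σ.apply_mem_of_sameCycle_iff hC hk) A
    rw [heq] at heven
    exact Nat.not_even_iff_odd.mpr hodd heven
  · obtain ⟨k₀, hk₀, hσk₀⟩ := σ.exists_mem_apply_notMem hC hsub hne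
    refine lt_of_le_of_lt (card_le_card fun k hk => ?_) (card_erase_lt_of_mem hk₀)
    obtain ⟨hkC, hcross⟩ := mem_filter.mp hk
    refine mem_erase.mpr ⟨?_, mem_inter.mpr ⟨hkC, ?_⟩⟩
    · rintro rfl
      apply hσk₀
      grind
    · grind

theorem card_filter_eq_sum_card_filter [DecidableEq α] [Fintype α] {s : Finset ι} {I : ι → Finset α}
    (hdisj : (s : Set ι).PairwiseDisjoint I) (hcover : s.biUnion I = univ)
    (p : α → Prop) [DecidablePred p] : #{k | p k} = ∑ j ∈ s, #{k ∈ I j | p k} := by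
  rw [← hcover, filter_biUnion, card_biUnion (hdisj.mono fun j => filter_subset p (I j))]

theorem card_le_sum_card_of_subset_biUnion [DecidableEq α] {s : Finset ι} {I : ι → Finset α}
    {S : Finset α} (hS : S ⊆ s.biUnion I) : #S ≤ ∑ j ∈ s with (I j ∩ S).Nonempty, #(I j) := by
  refine (card_le_card fun k hk => ?_).trans card_biUnion_le
  obtain ⟨j, hj, hkj⟩ := mem_biUnion.mp (hS hk)
  exact mem_biUnion.mpr ⟨j, mem_filter.mpr ⟨hj, k, mem_inter.mpr ⟨hkj, hk⟩⟩, hkj⟩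

theorem Equiv.Perm.card_crossing_add_card_le [DecidableEq α] [Fintype α] {s : Finset ι}
    {I : ι → Finset α} (hdisj : (s : Set ι).PairwiseDisjoint I) (hcover : s.biUnion I = univ)
    (hcycle : ∀ j ∈ s, ∀ x ∈ I j, ∀ y, σ.SameCycle x y ↔ y ∈ I j)
    (hodd : ∀ j ∈ s, Odd #(I j)) {A B : Finset α} (hAB : _root_.Disjoint A B) :
    #{k | k ∈ A ∧ σ k ∈ B} + #{k | k ∈ B ∧ σ k ∈ A} + #{j ∈ s | (I j ∩ (A ∪ B)).Nonempty} ≤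
      #(A ∪ B) := by
  have hsplit : #{k | k ∈ A ∧ σ k ∈ B} + #{k | k ∈ B ∧ σ k ∈ A} =
      #{k | k ∈ A ∧ σ k ∈ B ∨ k ∈ B ∧ σ k ∈ A} := by
    rw [filter_or, card_union_of_disjoint
      (disjoint_filter.mpr fun k _ hAk hBk => Finset.disjoint_left.mp hAB hAk.1 hBk.1)]
  have hcycle_le : ∀ j ∈ s, #{k ∈ I j | k ∈ A ∧ σ k ∈ B ∨ k ∈ B ∧ σ k ∈ A} +
      (if (I j ∩ (A ∪ B)).Nonempty then 1 else 0) ≤ #{k ∈ I j | k ∈ A ∪ B} := by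
    intro j hj
    rw [filter_mem_eq_inter]
    split_ifs with hne
    · exact σ.card_filter_crossing_lt (hcycle j hj) (hodd j hj) hAB hne
    · refine card_le_card fun k hk => ?_
      grind
  have hunion : #(A ∪ B) = #{k | k ∈ A ∪ B} := by rw [filter_mem_eq_inter, univ_inter]
  rw [hsplit, hunion, card_filter_eq_sum_card_filter hdisj hcover,
    card_filter_eq_sum_card_filter hdisj hcover, card_filter, ← sum_add_distrib]
  exact sum_le_sum hcycle_le

end Permutations

theorem sum_le_sum_Icc_card_of_antitoneOn {f : ℕ → ℕ} {ℓ : ℕ}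
    (hf : AntitoneOn f (Set.Icc 1 ℓ)) {J : Finset ℕ} (hJ : J ⊆ Icc 1 ℓ) :
    ∑ j ∈ J, f j ≤ ∑ i ∈ Icc 1 #J, f i := by
  induction ℓ generalizing J with
  | zero => simp [subset_empty.mp hJ]
  | succ ℓ ih =>
    have hf' : AntitoneOn f (Set.Icc 1 ℓ) := hf.mono (Set.Icc_subset_Icc_right ℓ.le_succ)
    by_cases hℓ : ℓ + 1 ∈ J
    · have hJ' : J.erase (ℓ + 1) ⊆ Icc 1 ℓ := fun j hj => by
        have := hJ (mem_of_mem_erase hj)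
        grind
      have hcard : #J = #(J.erase (ℓ + 1)) + 1 := (card_erase_add_one hℓ).symm
      have hcard_le : #(J.erase (ℓ + 1)) ≤ ℓ := by
        simpa using card_le_card hJ'
      rw [← add_sum_erase J f hℓ, hcard, sum_Icc_succ_top (by omega), add_comm]
      exact add_le_add (ih hf' hJ') (hf (by simp; omega) (by simp) (by omega))
    · exact ih hf' fun j hj => by
        have := hJ hj
        grind

theorem sInf_le_card_of_le_sum {f : ℕ → ℕ} {ℓ m : ℕ}
    (hf : ∀ i, 1 ≤ i → i < ℓ → f (i + 1) ≤ f i) {J : Finset ℕ} (hJ : J ⊆ Icc 1 ℓ)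
    (hm : m ≤ ∑ j ∈ J, f j) : sInf {k | m ≤ ∑ i ∈ Icc 1 k, f i} ≤ #J := by
  have hanti : AntitoneOn f (Set.Icc 1 ℓ) :=
    antitoneOn_of_succ_le Set.ordConnected_Icc fun i _ hi hsi => by
      simp only [Order.succ_eq_add_one, Set.mem_Icc] at hi hsi
      exact hf i hi.1 (by omega)
  exact Nat.sInf_le (hm.trans (sum_le_sum_Icc_card_of_antitoneOn hanti hJ))

theorem Fin.card_filter_sub_le_val {n b : ℕ} (hb : b ≤ n) : #{k : Fin n | n - b ≤ k} = b := by
  have hrev : #{k : Fin n | (Fin.revPerm k : ℕ) < b} = #{k : Fin n | (k : ℕ) < b} :=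
    Fin.revPerm.card_filter_apply_of_mapsTo (fun k _ => mem_univ _) (fun k : Fin n => (k : ℕ) < b)
  rw [Fin.card_filter_val_lt, min_eq_right hb] at hrev
  refine (congrArg card (filter_congr fun k _ => ?_)).trans hrev
  simp only [Fin.revPerm_apply, Fin.val_rev]
  omega

theorem entryA_add_entryA_add_card_add_card {n a b : ℕ} (u : Perm (Fin n))
    {A B : Finset (Fin n)} (hA : ∀ k, k ∈ A ↔ (k : ℕ) < a) (hB : ∀ k, k ∈ B ↔ n - b ≤ (k : ℕ)) :
    entryA u a (n - b + 1) + entryA u (n - b) (a + 1) + #A + #B =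
      n + #{k | k ∈ A ∧ u k ∈ B} + #{k | k ∈ B ∧ u k ∈ A} := by
  have hfirst : entryA u a (n - b + 1) = #{k | k ∈ A ∧ u k ∈ B} :=
    congrArg card <| filter_congr fun k _ => by rw [hA, hB]; omega
  have hsecond : entryA u (n - b) (a + 1) = #{k | k ∉ B ∧ u k ∉ A} :=
    congrArg card <| filter_congr fun k _ => by rw [hA, hB]; omega
  have hcount := u.card_filter_notMem_apply_notMem_add_card_add_card A B
  rw [Fintype.card_fin] at hcount
  omega

theorem MemCClassA.exists_cycle_decomposition {n ℓ : ℕ} {α : ℕ → ℕ} {w : Perm (Fin n)}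
    (hw : MemCClassA n ℓ α w) :
    ∃ I : ℕ → Finset (Fin n), (↑(Icc 1 ℓ) : Set ℕ).PairwiseDisjoint I ∧
      (Icc 1 ℓ).biUnion I = univ ∧
      (∀ j ∈ Icc 1 ℓ, ∀ x ∈ I j, ∀ y, (w * Fin.revPerm).SameCycle x y ↔ y ∈ I j) ∧
      ∀ j ∈ Icc 1 ℓ, #(I j) = α j := by
  obtain ⟨I, hcard, hdisj, hcover, horb⟩ := hw
  refine ⟨I, fun j hj j' hj' hne => ?_, hcover, fun j hj => ?_, fun j hj => ?_⟩
  · simp only [coe_Icc, Set.mem_Icc] at hj hj'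
    rcases lt_or_gt_of_ne hne with h | h
    · exact hdisj j j' hj.1 h hj'.2
    · exact (hdisj j' j hj'.1 h hj.2).symm
  · exact horb j (mem_Icc.mp hj).1 (mem_Icc.mp hj).2
  · exact hcard j (mem_Icc.mp hj).1 (mem_Icc.mp hj).2

theorem stmt6_general (n : ℕ) (ℓ : ℕ) (α : ℕ → ℕ)
    (hmono : ∀ i, 1 ≤ i → i < ℓ → α (i + 1) ≤ α i)
    (hodd : ∀ i, 1 ≤ i → i ≤ ℓ → Odd (α i))
    (w : Equiv.Perm (Fin n)) (hw : MemCClassA n ℓ α w)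
    (m : ℕ) (hm2 : m ≤ n - 1) :
    entryA (w * Fin.revPerm) ((m + 1) / 2) (n - m / 2 + 1) +
        entryA (w * Fin.revPerm) (n - m / 2) ((m + 1) / 2 + 1) ≤
      n - sInf {k : ℕ | m ≤ ∑ i ∈ Finset.Icc 1 k, α i} := by
  obtain ⟨I, hdisj, hcover, hcycle, hcard⟩ := hw.exists_cycle_decomposition
  set u := w * Fin.revPerm
  set A : Finset (Fin n) := {k | (k : ℕ) < (m + 1) / 2}
  set B : Finset (Fin n) := {k | n - m / 2 ≤ (k : ℕ)}
  have hA : #A = (m + 1) / 2 := by rw [Fin.card_filter_val_lt]; omega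
  have hB : #B = m / 2 := Fin.card_filter_sub_le_val (by omega)
  have hAB : Disjoint A B := disjoint_filter.mpr fun k _ hkA hkB => by omega
  have hAB_card : #(A ∪ B) = m := by rw [card_union_of_disjoint hAB]; omega
  have hentries := entryA_add_entryA_add_card_add_card (a := (m + 1) / 2) (b := m / 2) u
    (A := A) (B := B) (fun k => by simp [A]) (fun k => by simp [B])
  have hcross := u.card_crossing_add_card_le hdisj hcover hcycle
    (fun j hj => hcard j hj ▸ hodd j (mem_Icc.mp hj).1 (mem_Icc.mp hj).2) hAB
  set J := {j ∈ Icc 1 ℓ | (I j ∩ (A ∪ B)).Nonempty}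
  have hJ : sInf {k : ℕ | m ≤ ∑ i ∈ Icc 1 k, α i} ≤ #J :=
    sInf_le_card_of_le_sum hmono (filter_subset _ _) <| calc
      m = #(A ∪ B) := hAB_card.symm
      _ ≤ ∑ j ∈ J, #(I j) := card_le_sum_card_of_subset_biUnion (by simp [hcover])
      _ = ∑ j ∈ J, α j := sum_congr rfl fun j hj => hcard j (mem_filter.mp hj).1
  omega

/-- let `α = (α_1 ≥ ⋯ ≥ α_ℓ > 0)` be a partition of `n` with all parts odd,
let `w ∈ C_α` and `1 ≤ m ≤ n−1`.  Then
`(wδ)[⌈m/2⌉, n−⌊m/2⌋+1] + (wδ)[n−⌊m/2⌋, ⌈m/2⌉+1] ≤ n − min{k : α_1 + ⋯ + α_k ≥ m}`. -/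
theorem stmt6 (n : ℕ) (hn : 1 ≤ n) (ℓ : ℕ) (α : ℕ → ℕ)
    (hmono : ∀ i, 1 ≤ i → i < ℓ → α (i + 1) ≤ α i)
    (hpos : ∀ i, 1 ≤ i → i ≤ ℓ → 0 < α i)
    (hsupp : ∀ i, ℓ < i → α i = 0)
    (hsum : ∑ i ∈ Finset.Icc 1 ℓ, α i = n)
    (hodd : ∀ i, 1 ≤ i → i ≤ ℓ → Odd (α i))
    (w : Equiv.Perm (Fin n)) (hw : MemCClassA n ℓ α w)
    (m : ℕ) (hm1 : 1 ≤ m) (hm2 : m ≤ n - 1) :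
    entryA (w * Fin.revPerm) ((m + 1) / 2) (n - m / 2 + 1) +
        entryA (w * Fin.revPerm) (n - m / 2) ((m + 1) / 2 + 1) ≤
      n - sInf {k : ℕ | m ≤ ∑ i ∈ Finset.Icc 1 k, α i} :=
  stmt6_general n ℓ α hmono hodd w hw m hm2
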